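/- arXiv:1304.1237 — 2 statements merged into one kernel-verified Lean document; each statement's English description precedes it below -/
import Mathlib

section
/- For every integer n ≥ 2, every minimal Markov basis for A_{n,2} contains exactly C(n,3) moves of degree three, where C(n,3) denotes the binomial coefficient n choose 3. -/
/-- The sufficient-statistic map (configuration matrix `A_{n,r}` applied to a
nonnegative integer vector indexed by `S_{n,r}`, the injections from `Fin r` to `Fin n`):
the `(j,k)` coordinate counts, with multiplicity `x σ`, the votes `σ` with `σ j = k`. -/
noncomputable def suffN (n r : ℕ) (x : (Fin r ↪ Fin n) → ℕ) : Fin r × Fin n → ℕ :=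
  fun p => ∑ σ : Fin r ↪ Fin n, if σ p.1 = p.2 then x σ else 0

/-- The configuration matrix `A_{n,r}` applied to an integer vector. -/
noncomputable def suffZ (n r : ℕ) (z : (Fin r ↪ Fin n) → ℤ) : Fin r × Fin n → ℤ :=
  fun p => ∑ σ : Fin r ↪ Fin n, if σ p.1 = p.2 then z σ else 0

/-- The degree of a move `z`: `Σ_σ max(z σ, 0)`. -/
noncomputable def moveDeg (n r : ℕ) (z : (Fin r ↪ Fin n) → ℤ) : ℕ :=
  ∑ σ : Fin r ↪ Fin n, (z σ).toNat

/-- `B` is a Markov basis for `A_{n,r}`: a finite set of moves (elements of the integer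
kernel of `A_{n,r}`) such that any two points of a common fiber are connected by a path
staying in the fiber whose steps are elements of `B ∪ (-B)`. -/
def IsMarkovBasis (n r : ℕ) (B : Finset ((Fin r ↪ Fin n) → ℤ)) : Prop :=
  (∀ z ∈ B, suffZ n r z = 0) ∧
  ∀ x y : (Fin r ↪ Fin n) → ℕ, suffN n r x = suffN n r y →
    ∃ (m : ℕ) (w : ℕ → (Fin r ↪ Fin n) → ℕ),
      w 0 = x ∧ w m = y ∧
      (∀ i ≤ m, suffN n r (w i) = suffN n r x) ∧
      (∀ i < m, (fun σ => (w (i+1) σ : ℤ) - (w i σ : ℤ)) ∈ B ∨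
                (fun σ => (w i σ : ℤ) - (w (i+1) σ : ℤ)) ∈ B)

/-!
Write a move as `w = w⁺ - w⁻`. If `w` belongs to a minimal Markov basis `B`, then `w⁺` and `w⁻`
cannot be joined inside their fiber by the other moves of `B`, since otherwise `w` could be
dropped. For a move of degree three, `w⁺` and `w⁻` consist of three votes each. Two points of
such a fiber that share a vote are joined by moves of degree at most two: removing the common
vote leaves a fiber of size two. Match the votes of `w⁻` with those of `w⁺` by first coordinate
and swap second coordinates. This joins `w⁺` and `w⁻` through a common neighbour unless they are
the two orientations `a → b → c → a` and `a → c → b → a` of a triangle. Conversely, the fiber of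
a triangle consists of its two orientations only. So every Markov basis contains one of the two
opposite triangle moves on each 3-set `{a, b, c}`, and a minimal one contains exactly one.
-/

open Finset Function.Embedding

namespace Relation

theorem reflTransGen_iff_exists_path {α : Type*} {R : α → α → Prop} {x y : α} :
    ReflTransGen R x y ↔
      ∃ (m : ℕ) (w : ℕ → α), w 0 = x ∧ w m = y ∧ ∀ i < m, R (w i) (w (i + 1)) := by
  constructor
  · intro h
    induction h with
    | refl => exact ⟨0, fun _ => x, rfl, rfl, by simp⟩
    | @tail b c _ hbc ih =>
      obtain ⟨m, w, h0, hm, hw⟩ := ih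
      refine ⟨m + 1, fun i => if i ≤ m then w i else c, by simpa using h0, by simp, ?_⟩
      intro i hi
      rcases Nat.lt_or_ge i m with hi | hi
      · simpa [hi.le, Nat.succ_le_of_lt hi] using hw i hi
      · obtain rfl : i = m := by omega
        simpa [hm] using hbc
  · rintro ⟨m, w, rfl, rfl, hw⟩
    suffices ∀ i ≤ m, ReflTransGen R (w 0) (w i) from this m le_rfl
    intro i hi
    induction i with
    | zero => exact .refl
    | succ i ih => exact (ih (by omega)).tail (hw i (by omega))

end Relation

lemma Equiv.Perm.exists_apply_eq_of_card_fiber_eq {ι α : Type*} [Fintype ι] [DecidableEq α]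
    {f g : ι → α} (h : ∀ k, Fintype.card {i // f i = k} = Fintype.card {i // g i = k}) :
    ∃ σ : Equiv.Perm ι, ∀ i, g (σ i) = f i :=
  ⟨Equiv.ofFiberEquiv fun k => Fintype.equivOfCardEq (h k), Equiv.ofFiberEquiv_map _⟩

lemma Equiv.Perm.eq_finRotate_three_of_forall_ne {τ : Equiv.Perm (Fin 3)} (h : ∀ i, τ i ≠ i) :
    τ = finRotate 3 ∨ τ = (finRotate 3).symm := by
  revert τ; decide

section MarkovBasis

variable {n r : ℕ}

lemma suffN_add (x y : (Fin r ↪ Fin n) → ℕ) :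
    suffN n r (x + y) = suffN n r x + suffN n r y := by
  funext p
  simp only [suffN, Pi.add_apply, ← sum_add_distrib]
  exact sum_congr rfl fun σ _ => by split <;> simp

lemma suffN_sum {ι : Type*} [Fintype ι] (x : ι → (Fin r ↪ Fin n) → ℕ) :
    suffN n r (∑ i, x i) = ∑ i, suffN n r (x i) := by
  classical
  induction (univ : Finset ι) using Finset.induction_on with
  | empty => funext p; simp [suffN]
  | insert i s hi ih => rw [sum_insert hi, sum_insert hi, suffN_add, ih]

lemma suffZ_sub (x y : (Fin r ↪ Fin n) → ℕ) :
    suffZ n r (fun σ => (y σ : ℤ) - x σ) = fun p => (suffN n r y p : ℤ) - suffN n r x p := by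
  funext p
  simp only [suffZ, suffN, Nat.cast_sum, ← sum_sub_distrib]
  exact sum_congr rfl fun σ _ => by split <;> simp

lemma suffN_eq_of_suffZ_sub_eq_zero {x y : (Fin r ↪ Fin n) → ℕ}
    (h : suffZ n r (fun σ => (y σ : ℤ) - x σ) = 0) : suffN n r x = suffN n r y := by
  funext p
  have := congrFun (suffZ_sub x y ▸ h) p
  simp only [Pi.zero_apply, sub_eq_zero] at this
  exact_mod_cast this.symm

lemma sum_eq_sum_suffN (hr : 0 < r) (x : (Fin r ↪ Fin n) → ℕ) :
    ∑ σ, x σ = ∑ k, suffN n r x (⟨0, hr⟩, k) := by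
  unfold suffN
  rw [sum_comm]
  exact sum_congr rfl fun σ _ => by simp

lemma sum_eq_of_suffN_eq (hr : 0 < r) {x y : (Fin r ↪ Fin n) → ℕ}
    (h : suffN n r x = suffN n r y) : ∑ σ, x σ = ∑ σ, y σ := by
  rw [sum_eq_sum_suffN hr, sum_eq_sum_suffN hr, h]

lemma exists_eq_single_add {x : (Fin r ↪ Fin n) → ℕ} {v : Fin r ↪ Fin n} (hv : 0 < x v) :
    ∃ x', x = (Pi.single v 1 : (Fin r ↪ Fin n) → ℕ) + x' :=
  ⟨x - Pi.single v 1, by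
    funext σ
    by_cases hσ : σ = v
    · subst hσ
      simp only [Pi.add_apply, Pi.sub_apply, Pi.single_eq_same]
      omega
    · simp [hσ]⟩

def MarkovStep (B : Finset ((Fin r ↪ Fin n) → ℤ)) (x y : (Fin r ↪ Fin n) → ℕ) : Prop :=
  (fun σ => (y σ : ℤ) - x σ) ∈ B ∨ (fun σ => (x σ : ℤ) - y σ) ∈ B

def MarkovConnected (B : Finset ((Fin r ↪ Fin n) → ℤ)) :
    ((Fin r ↪ Fin n) → ℕ) → ((Fin r ↪ Fin n) → ℕ) → Prop :=
  Relation.ReflTransGen (MarkovStep B)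

variable {B : Finset ((Fin r ↪ Fin n) → ℤ)} {x y : (Fin r ↪ Fin n) → ℕ}

lemma MarkovStep.symm (h : MarkovStep B x y) : MarkovStep B y x := Or.symm h

instance : Std.Symm (MarkovStep B) := ⟨fun _ _ => MarkovStep.symm⟩

lemma MarkovConnected.symm (h : MarkovConnected B x y) : MarkovConnected B y x :=
  Std.Symm.symm (r := Relation.ReflTransGen (MarkovStep B)) _ _ h

lemma MarkovStep.suffN_eq (hker : ∀ z ∈ B, suffZ n r z = 0) (h : MarkovStep B x y) :
    suffN n r x = suffN n r y :=
  h.elim (fun h => suffN_eq_of_suffZ_sub_eq_zero (hker _ h))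
    fun h => (suffN_eq_of_suffZ_sub_eq_zero (hker _ h)).symm

lemma MarkovConnected.suffN_eq (hker : ∀ z ∈ B, suffZ n r z = 0) (h : MarkovConnected B x y) :
    suffN n r x = suffN n r y := by
  induction h with
  | refl => rfl
  | tail _ hbc ih => exact ih.trans (hbc.suffN_eq hker)

lemma MarkovStep.add_left (s : (Fin r ↪ Fin n) → ℕ) (h : MarkovStep B x y) :
    MarkovStep B (s + x) (s + y) := by
  have key : ∀ p q : (Fin r ↪ Fin n) → ℕ,
      (fun σ => ((s + q) σ : ℤ) - (s + p) σ) = fun σ => (q σ : ℤ) - p σ := by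
    intro p q; funext σ; push_cast [Pi.add_apply]; ring
  unfold MarkovStep
  rwa [key, key]

lemma MarkovConnected.add_left (s : (Fin r ↪ Fin n) → ℕ) (h : MarkovConnected B x y) :
    MarkovConnected B (s + x) (s + y) :=
  Relation.ReflTransGen.lift (s + ·) (fun _ _ => MarkovStep.add_left s) _ _ h

lemma isMarkovBasis_iff : IsMarkovBasis n r B ↔
    (∀ z ∈ B, suffZ n r z = 0) ∧ ∀ x y, suffN n r x = suffN n r y → MarkovConnected B x y := by
  refine and_congr_right fun hker => forall₂_congr fun x y => imp_congr_right fun _ => ?_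
  rw [MarkovConnected, Relation.reflTransGen_iff_exists_path]
  constructor
  · rintro ⟨m, w, h0, hm, -, hw⟩
    exact ⟨m, w, h0, hm, hw⟩
  · rintro ⟨m, w, rfl, rfl, hw⟩
    refine ⟨m, w, rfl, rfl, fun i hi => ?_, hw⟩
    have : MarkovConnected B (w 0) (w i) :=
      Relation.reflTransGen_iff_exists_path.2 ⟨i, w, rfl, rfl, fun j hj => hw j (by omega)⟩
    exact (this.suffN_eq hker).symm

variable {w : (Fin r ↪ Fin n) → ℤ}

def movePlus (w : (Fin r ↪ Fin n) → ℤ) : (Fin r ↪ Fin n) → ℕ := fun σ => (w σ).toNat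

def moveMinus (w : (Fin r ↪ Fin n) → ℤ) : (Fin r ↪ Fin n) → ℕ := fun σ => (-w σ).toNat

lemma sub_movePlus_moveMinus (w : (Fin r ↪ Fin n) → ℤ) :
    (fun σ => (movePlus w σ : ℤ) - moveMinus w σ) = w := by
  funext σ; simp only [movePlus, moveMinus]; omega

lemma exists_eq_add_moveMinus_of_sub_eq (h : (fun σ => (y σ : ℤ) - x σ) = w) :
    ∃ s, x = s + moveMinus w ∧ y = s + movePlus w := by
  refine ⟨fun σ => x σ - moveMinus w σ, ?_, ?_⟩ <;> funext σ <;> have := congrFun h σ <;>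
    simp only [Pi.add_apply, movePlus, moveMinus] at this ⊢ <;> omega

lemma MarkovStep.markovConnected_erase
    (hw : MarkovConnected (B.erase w) (movePlus w) (moveMinus w)) (h : MarkovStep B x y) :
    MarkovConnected (B.erase w) x y := by
  wlog hxy : (fun σ => (y σ : ℤ) - x σ) ∈ B generalizing x y
  · exact (this h.symm (h.resolve_left hxy)).symm
  by_cases hEq : (fun σ => (y σ : ℤ) - x σ) = w
  · obtain ⟨s, rfl, rfl⟩ := exists_eq_add_moveMinus_of_sub_eq hEq
    exact hw.symm.add_left s
  · exact .single (Or.inl (mem_erase.2 ⟨hEq, hxy⟩))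

lemma IsMarkovBasis.erase (hB : IsMarkovBasis n r B)
    (hw : MarkovConnected (B.erase w) (movePlus w) (moveMinus w)) :
    IsMarkovBasis n r (B.erase w) := by
  rw [isMarkovBasis_iff] at hB ⊢
  refine ⟨fun z hz => hB.1 z (mem_of_mem_erase hz), fun x y hxy => ?_⟩
  exact Relation.ReflTransGen.lift' id (fun _ _ => MarkovStep.markovConnected_erase hw) _ _
    (hB.2 x y hxy)

lemma not_markovConnected_erase_of_minimal
    (hB : IsMarkovBasis n r B) (hmin : ∀ B' ⊂ B, ¬ IsMarkovBasis n r B') (hw : w ∈ B) :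
    ¬ MarkovConnected (B.erase w) (movePlus w) (moveMinus w) :=
  fun h => hmin _ (erase_ssubset hw) (hB.erase h)

lemma neg_notMem_of_minimal
    (hB : IsMarkovBasis n r B) (hmin : ∀ B' ⊂ B, ¬ IsMarkovBasis n r B') (hw : w ∈ B)
    (hw0 : w ≠ 0) : -w ∉ B := by
  intro hnw
  have hne : w ≠ -w := fun h => hw0 <| funext fun σ => by
    have := congrFun h σ
    simp only [Pi.neg_apply, Pi.zero_apply] at this ⊢
    omega
  apply not_markovConnected_erase_of_minimal hB hmin hnw
  refine .single (Or.inl (mem_erase.2 ⟨?_, ?_⟩)) <;>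
    rwa [show (fun σ => (moveMinus (-w) σ : ℤ) - movePlus (-w) σ) = w by
      funext σ; simp only [movePlus, moveMinus, Pi.neg_apply]; omega]

lemma moveDeg_sub_le (x y : (Fin r ↪ Fin n) → ℕ) :
    moveDeg n r (fun σ => (y σ : ℤ) - x σ) ≤ ∑ σ, y σ :=
  sum_le_sum fun σ _ => by dsimp only; omega

lemma MarkovStep.erase_of_sum_lt (h : MarkovStep B x y)
    (hx : ∑ σ, x σ < moveDeg n r w) (hy : ∑ σ, y σ < moveDeg n r w) :
    MarkovStep (B.erase w) x y := by
  refine h.imp (fun h => mem_erase.2 ⟨?_, h⟩) (fun h => mem_erase.2 ⟨?_, h⟩) <;> rintro rfl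
  · exact (moveDeg_sub_le x y).not_gt hy
  · exact (moveDeg_sub_le y x).not_gt hx

lemma IsMarkovBasis.markovConnected_erase_of_sum_lt (hB : IsMarkovBasis n r B) (hr : 0 < r)
    (hxy : suffN n r x = suffN n r y) (hdeg : ∑ σ, x σ < moveDeg n r w) :
    MarkovConnected (B.erase w) x y := by
  rw [isMarkovBasis_iff] at hB
  have hsum {z} (hz : MarkovConnected B x z) : ∑ σ, z σ < moveDeg n r w :=
    sum_eq_of_suffN_eq hr (hz.suffN_eq hB.1) ▸ hdeg
  have hconn := hB.2 x y hxy
  clear hxy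
  induction hconn with
  | refl => exact .refl
  | tail hxb hbc ih => exact ih.tail (hbc.erase_of_sum_lt (hsum hxb) (hsum (hxb.tail hbc)))

def SharesVote (x y : (Fin r ↪ Fin n) → ℕ) : Prop := ∃ σ, 0 < x σ ∧ 0 < y σ

lemma IsMarkovBasis.markovConnected_erase_of_sharesVote (hB : IsMarkovBasis n r B) (hr : 0 < r)
    (hxy : suffN n r x = suffN n r y) (hdeg : ∑ σ, x σ ≤ moveDeg n r w) (hs : SharesVote x y) :
    MarkovConnected (B.erase w) x y := by
  obtain ⟨v, hx, hy⟩ := hs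
  obtain ⟨x', rfl⟩ := exists_eq_single_add hx
  obtain ⟨y', rfl⟩ := exists_eq_single_add hy
  rw [suffN_add, suffN_add, add_right_inj] at hxy
  refine (hB.markovConnected_erase_of_sum_lt hr hxy ?_).add_left _
  simp only [Pi.add_apply, sum_add_distrib, sum_pi_single', mem_univ, if_true] at hdeg
  omega

end MarkovBasis

section Votes

variable {n : ℕ} {ι : Type*} [Fintype ι]

/-- The table holding the single vote `(a, b)`; it is `0` when `a = b`. -/
def vote (a b : Fin n) : (Fin 2 ↪ Fin n) → ℕ := fun σ => if σ 0 = a ∧ σ 1 = b then 1 else 0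

lemma vote_eq_single (v : Fin 2 ↪ Fin n) : vote (v 0) (v 1) = Pi.single v 1 := by
  funext σ
  have : σ 0 = v 0 ∧ σ 1 = v 1 ↔ σ = v :=
    ⟨fun h => DFunLike.ext _ _ (Fin.forall_fin_two.2 h), fun h => h ▸ ⟨rfl, rfl⟩⟩
  simp only [vote, Pi.single_apply, this]

lemma suffN_vote {a b : Fin n} (h : a ≠ b) (j : Fin 2) (k : Fin n) :
    suffN n 2 (vote a b) (j, k) = if ![a, b] j = k then 1 else 0 := by
  have hj : embFinTwo h j = ![a, b] j := by fin_cases j <;> rfl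
  rw [show vote a b = vote (embFinTwo h 0) (embFinTwo h 1) from rfl, vote_eq_single]
  simp only [suffN, Pi.single_apply]
  rw [sum_eq_single (embFinTwo h) (fun τ _ hτ => by simp [hτ]) (by simp), hj]
  simp

lemma suffN_sum_vote {a b : ι → Fin n} (hab : ∀ i, a i ≠ b i) (j : Fin 2) (k : Fin n) :
    suffN n 2 (∑ i, vote (a i) (b i)) (j, k) = Fintype.card {i // ![a i, b i] j = k} := by
  rw [suffN_sum, Finset.sum_apply, Fintype.card_subtype, card_filter]
  exact sum_congr rfl fun i _ => suffN_vote (hab i) j k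

lemma suffN_sum_vote_eq_iff {κ : Type*} [Fintype κ] {a b : ι → Fin n} {a' b' : κ → Fin n}
    (hab : ∀ i, a i ≠ b i) (hab' : ∀ i, a' i ≠ b' i) :
    suffN n 2 (∑ i, vote (a i) (b i)) = suffN n 2 (∑ i, vote (a' i) (b' i)) ↔
      (∀ k, Fintype.card {i // a i = k} = Fintype.card {i // a' i = k}) ∧
      ∀ k, Fintype.card {i // b i = k} = Fintype.card {i // b' i = k} := by
  simp only [funext_iff, Prod.forall, Fin.forall_fin_two, suffN_sum_vote hab,
    suffN_sum_vote hab']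
  rfl

lemma exists_perm_of_suffN_sum_vote_eq {a b a' b' : ι → Fin n} (hab : ∀ i, a i ≠ b i)
    (hab' : ∀ i, a' i ≠ b' i)
    (h : suffN n 2 (∑ i, vote (a i) (b i)) = suffN n 2 (∑ i, vote (a' i) (b' i))) :
    ∃ τ : Equiv.Perm ι, (∀ i, a i ≠ b (τ i)) ∧
      ∑ i, vote (a' i) (b' i) = ∑ i, vote (a i) (b (τ i)) := by
  classical
  obtain ⟨hfst, hsnd⟩ := (suffN_sum_vote_eq_iff hab hab').1 h
  obtain ⟨σ, hσ⟩ := Equiv.Perm.exists_apply_eq_of_card_fiber_eq hfst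
  obtain ⟨τ, hτ⟩ := Equiv.Perm.exists_apply_eq_of_card_fiber_eq (f := b' ∘ σ) (g := b) fun k =>
    (Fintype.card_congr (σ.subtypeEquiv fun _ => Iff.rfl)).trans (hsnd k).symm
  refine ⟨τ, fun i => ?_, ?_⟩
  · rw [hτ, ← hσ]; exact hab' (σ i)
  · rw [← Equiv.sum_comp σ]
    exact sum_congr rfl fun i _ => by rw [hσ, hτ]; rfl

lemma suffN_sum_vote_perm {a b : ι → Fin n} (τ : Equiv.Perm ι) (hab : ∀ i, a i ≠ b i)
    (habτ : ∀ i, a i ≠ b (τ i)) :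
    suffN n 2 (∑ i, vote (a i) (b (τ i))) = suffN n 2 (∑ i, vote (a i) (b i)) :=
  (suffN_sum_vote_eq_iff habτ hab).2
    ⟨fun _ => rfl, fun _ => Fintype.card_congr (τ.subtypeEquiv fun _ => Iff.rfl)⟩

lemma sum_vote_apply_pos {a b : ι → Fin n} {σ : Fin 2 ↪ Fin n} (i : ι) (h0 : σ 0 = a i)
    (h1 : σ 1 = b i) : 0 < (∑ j, vote (a j) (b j)) σ := by
  rw [Finset.sum_apply]
  calc 0 < vote (a i) (b i) σ := by simp [vote, h0, h1]
    _ ≤ _ := single_le_sum (f := fun j => vote (a j) (b j) σ) (fun _ _ => Nat.zero_le _) (mem_univ i)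

lemma sharesVote_sum_vote {κ : Type*} [Fintype κ] {a b : ι → Fin n} {a' b' : κ → Fin n}
    (hab : ∀ i, a i ≠ b i) {i : ι} {j : κ} (ha : a' j = a i) (hb : b' j = b i) :
    SharesVote (∑ i, vote (a i) (b i)) (∑ j, vote (a' j) (b' j)) :=
  ⟨embFinTwo (hab i), sum_vote_apply_pos i rfl rfl, sum_vote_apply_pos j ha.symm hb.symm⟩

lemma exists_eq_sum_vote {m : ℕ} {x : (Fin 2 ↪ Fin n) → ℕ} (hx : ∑ σ, x σ = m) :
    ∃ a b : Fin m → Fin n, (∀ i, a i ≠ b i) ∧ x = ∑ i, vote (a i) (b i) := by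
  induction m generalizing x with
  | zero =>
    refine ⟨Fin.elim0, Fin.elim0, Fin.rec0, ?_⟩
    simpa [funext_iff] using hx
  | succ m ih =>
    obtain ⟨v, -, hv⟩ := exists_ne_zero_of_sum_ne_zero (hx.trans_ne m.succ_ne_zero)
    obtain ⟨x', rfl⟩ := exists_eq_single_add (Nat.pos_of_ne_zero hv)
    simp only [Pi.add_apply, sum_add_distrib, sum_pi_single', mem_univ, if_true] at hx
    obtain ⟨a, b, hab, rfl⟩ := ih (x := x') (by omega)
    refine ⟨Fin.cons (v 0) a, Fin.cons (v 1) b, Fin.cases (v.injective.ne (by decide)) hab, ?_⟩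
    simp [Fin.sum_univ_succ, vote_eq_single]

end Votes

section Triangle

variable {n : ℕ}

def triangle (a b c : Fin n) : (Fin 2 ↪ Fin n) → ℕ := vote a b + vote b c + vote c a

def triangleMove (a b c : Fin n) : (Fin 2 ↪ Fin n) → ℤ :=
  fun σ => (triangle a b c σ : ℤ) - triangle a c b σ

lemma sum_vote_finRotate (t : Fin 3 → Fin n) :
    ∑ i, vote (t i) (t (finRotate 3 i)) = triangle (t 0) (t 1) (t 2) := by
  simp [Fin.sum_univ_three, triangle]

lemma sum_vote_finRotate_symm (t : Fin 3 → Fin n) :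
    ∑ i, vote (t i) (t ((finRotate 3).symm i)) = triangle (t 0) (t 2) (t 1) := by
  rw [Fin.sum_univ_three, triangle]
  change vote (t 0) (t 2) + vote (t 1) (t 0) + vote (t 2) (t 1) = _
  abel

lemma exists_sharesVote_or_eq_triangle {a b : Fin 3 → Fin n} {τ : Equiv.Perm (Fin 3)}
    (hab : ∀ i, a i ≠ b i) (habτ : ∀ i, a i ≠ b (τ i)) :
    (∃ u, suffN n 2 u = suffN n 2 (∑ i, vote (a i) (b i)) ∧
      SharesVote (∑ i, vote (a i) (b i)) u ∧ SharesVote u (∑ i, vote (a i) (b (τ i)))) ∨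
    ∃ c d e, c ≠ d ∧ d ≠ e ∧ c ≠ e ∧
      ∑ i, vote (a i) (b i) = triangle c d e ∧ ∑ i, vote (a i) (b (τ i)) = triangle c e d := by
  by_cases h : ∃ i, a (τ i) ≠ b i
  · obtain ⟨i, hi⟩ := h
    left
    -- swapping the second coordinates of the votes `i` and `τ i` keeps the third vote of the
    -- first point and creates the vote `i` of the second one
    set s := Equiv.swap i (τ i)
    obtain ⟨k, hki, hkτ⟩ : ∃ k, k ≠ i ∧ k ≠ τ i :=
      (by decide : ∀ i j : Fin 3, ∃ k, k ≠ i ∧ k ≠ j) i (τ i)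
    have hsk : s k = k := Equiv.swap_apply_of_ne_of_ne hki hkτ
    have hs : ∀ j, a j ≠ b (s j) := by
      intro j
      rcases eq_or_ne j i with rfl | hji
      · simpa [s] using habτ j
      rcases eq_or_ne j (τ i) with rfl | hjτ
      · simpa [s] using hi
      · rw [Equiv.swap_apply_of_ne_of_ne hji hjτ]; exact hab j
    refine ⟨∑ j, vote (a j) (b (s j)), suffN_sum_vote_perm s hab hs,
      sharesVote_sum_vote hab (j := k) rfl (by rw [hsk]),
      sharesVote_sum_vote hs (j := i) rfl (by simp [s])⟩
  · right
    simp only [not_exists, not_not] at h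
    obtain rfl : b = a ∘ τ := funext fun i => (h i).symm
    have hτ : ∀ i, τ i ≠ i := fun i hi => hab i (by simp [hi])
    rcases Equiv.Perm.eq_finRotate_three_of_forall_ne hτ with rfl | rfl
    · have hrot : ∀ i, finRotate 3 (finRotate 3 i) = (finRotate 3).symm i := by decide
      refine ⟨a 0, a 1, a 2, hab 0, hab 1, (hab 2).symm, sum_vote_finRotate a, ?_⟩
      simp only [Function.comp_apply, hrot, sum_vote_finRotate_symm]
    · have hrot : ∀ i, (finRotate 3).symm ((finRotate 3).symm i) = finRotate 3 i := by decide
      refine ⟨a 0, a 2, a 1, hab 0, hab 2, (hab 1).symm, sum_vote_finRotate_symm a, ?_⟩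
      simp only [Function.comp_apply, hrot, sum_vote_finRotate]

variable {a b c : Fin n}

lemma suffN_triangle (hab : a ≠ b) (hbc : b ≠ c) (hac : a ≠ c) :
    suffN n 2 (triangle a b c) = fun p => if p.2 ∈ ({a, b, c} : Finset (Fin n)) then 1 else 0 := by
  funext ⟨j, k⟩
  simp only [triangle, suffN_add, Pi.add_apply, suffN_vote hab, suffN_vote hbc,
    suffN_vote hac.symm, mem_insert, mem_singleton]
  fin_cases j <;> by_cases ha : a = k <;> by_cases hb : b = k <;> by_cases hc : c = k <;>
    simp_all [eq_comm]

lemma sum_triangle (hab : a ≠ b) (hbc : b ≠ c) (hac : a ≠ c) : ∑ σ, triangle a b c σ = 3 := by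
  rw [sum_eq_sum_suffN two_pos, suffN_triangle hab hbc hac, sum_boole, filter_mem_eq_inter,
    univ_inter, Nat.cast_id, card_eq_three]
  exact ⟨a, b, c, hab, hac, hbc, rfl⟩

lemma triangle_eq_zero_or (hab : a ≠ b) (hbc : b ≠ c) (hac : a ≠ c) (σ : Fin 2 ↪ Fin n) :
    triangle a b c σ = 0 ∨ triangle a c b σ = 0 := by
  simp only [triangle, vote, Pi.add_apply]
  split_ifs <;> simp_all

lemma triangle_ne_triangle (hab : a ≠ b) (hbc : b ≠ c) (hac : a ≠ c) :
    triangle a b c ≠ triangle a c b := fun h => by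
  simpa [triangle, vote, embFinTwo_apply_zero, embFinTwo_apply_one, hab, hbc, hac, hab.symm,
    hbc.symm, hac.symm] using congrFun h (embFinTwo hab)

lemma movePlus_triangleMove (hab : a ≠ b) (hbc : b ≠ c) (hac : a ≠ c) :
    movePlus (triangleMove a b c) = triangle a b c := by
  funext σ
  have := triangle_eq_zero_or hab hbc hac σ
  simp only [movePlus, triangleMove]
  omega

lemma moveDeg_triangleMove (hab : a ≠ b) (hbc : b ≠ c) (hac : a ≠ c) :
    moveDeg n 2 (triangleMove a b c) = 3 := by
  change ∑ σ, movePlus _ σ = 3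
  rw [movePlus_triangleMove hab hbc hac, sum_triangle hab hbc hac]

lemma triangleMove_swap (a b c : Fin n) : triangleMove a c b = -triangleMove a b c := by
  funext σ; simp [triangleMove]

lemma triangleMove_ne_zero (hab : a ≠ b) (hbc : b ≠ c) (hac : a ≠ c) : triangleMove a b c ≠ 0 :=
  fun h => triangle_ne_triangle hab hbc hac <| funext fun σ => by
    simpa [triangleMove, sub_eq_zero] using congrFun h σ

lemma eq_triangle_or_of_suffN_eq (hab : a ≠ b) (hbc : b ≠ c) (hac : a ≠ c)
    {x : (Fin 2 ↪ Fin n) → ℕ} (hx : suffN n 2 x = suffN n 2 (triangle a b c)) :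
    x = triangle a b c ∨ x = triangle a c b := by
  set t : Fin 3 → Fin n := ![a, b, c]
  have ht : ∀ i, t i ≠ t (finRotate 3 i) := by
    simp [Fin.forall_fin_succ, t, hab, hbc, hac.symm]
  obtain ⟨a', b', hab', rfl⟩ := exists_eq_sum_vote
    ((sum_eq_of_suffN_eq two_pos hx).trans (sum_triangle hab hbc hac))
  rw [show triangle a b c = ∑ i, vote (t i) (t (finRotate 3 i)) from
    (sum_vote_finRotate t).symm] at hx
  obtain ⟨τ, hτ, hx'⟩ := exists_perm_of_suffN_sum_vote_eq ht hab' hx.symm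
  have hxπ : ∀ i, finRotate 3 (τ i) = (finRotate 3 * τ) i := fun _ => rfl
  simp only [hxπ] at hτ hx'
  rw [hx']
  rcases Equiv.Perm.eq_finRotate_three_of_forall_ne (fun i h => hτ i (congrArg t h).symm)
    with hπ | hπ <;> rw [hπ]
  · exact Or.inl (sum_vote_finRotate t)
  · exact Or.inr (sum_vote_finRotate_symm t)

end Triangle

section MinimalMarkovBasis

variable {n : ℕ} {B : Finset ((Fin 2 ↪ Fin n) → ℤ)} {a b c : Fin n}

lemma exists_eq_triangleMove_of_mem_minimal (hB : IsMarkovBasis n 2 B)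
    (hmin : ∀ B' ⊂ B, ¬ IsMarkovBasis n 2 B') {w : (Fin 2 ↪ Fin n) → ℤ} (hw : w ∈ B)
    (hdeg : moveDeg n 2 w = 3) :
    ∃ a b c, a ≠ b ∧ b ≠ c ∧ a ≠ c ∧ w = triangleMove a b c := by
  have hfib : suffN n 2 (moveMinus w) = suffN n 2 (movePlus w) :=
    suffN_eq_of_suffZ_sub_eq_zero (by rw [sub_movePlus_moveMinus]; exact hB.1 w hw)
  have hplus : ∑ σ, movePlus w σ = 3 := hdeg
  obtain ⟨a, b, hab, hx⟩ := exists_eq_sum_vote hplus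
  obtain ⟨a', b', hab', hy⟩ :=
    exists_eq_sum_vote ((sum_eq_of_suffN_eq two_pos hfib).trans hplus)
  rw [hx, hy] at hfib
  obtain ⟨τ, habτ, hy'⟩ := exists_perm_of_suffN_sum_vote_eq hab hab' hfib.symm
  rw [hy'] at hy
  rcases exists_sharesVote_or_eq_triangle hab habτ with
    ⟨u, hu, hxu, huy⟩ | ⟨c, d, e, hcd, hde, hce, hxT, hyT⟩
  · refine absurd ?_ (not_markovConnected_erase_of_minimal hB hmin hw)
    have hdeg_u : ∑ σ, u σ ≤ moveDeg n 2 w := by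
      rw [sum_eq_of_suffN_eq two_pos hu, ← hx, hplus, hdeg]
    rw [hx, hy]
    exact (hB.markovConnected_erase_of_sharesVote two_pos hu.symm (by rw [← hx, hplus, hdeg])
      hxu).trans (hB.markovConnected_erase_of_sharesVote two_pos
        (hu.trans (suffN_sum_vote_perm τ hab habτ).symm) hdeg_u huy)
  · refine ⟨c, d, e, hcd, hde, hce, ?_⟩
    rw [← sub_movePlus_moveMinus w, hx, hy, hxT, hyT]
    rfl

lemma suffN_triangle_swap (hab : a ≠ b) (hbc : b ≠ c) (hac : a ≠ c) :
    suffN n 2 (triangle a c b) = suffN n 2 (triangle a b c) := by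
  rw [suffN_triangle hac hbc.symm hab, suffN_triangle hab hbc hac, pair_comm]

lemma triangleMove_mem_or_of_isMarkovBasis (hB : IsMarkovBasis n 2 B) (hab : a ≠ b)
    (hbc : b ≠ c) (hac : a ≠ c) : triangleMove a b c ∈ B ∨ triangleMove a c b ∈ B := by
  rw [isMarkovBasis_iff] at hB
  by_contra! h
  -- the fiber of `triangle a b c` is `{triangle a b c, triangle a c b}`, so without the two
  -- triangle moves no other point can be reached
  have key : ∀ y, MarkovConnected B (triangle a b c) y → y = triangle a b c := by
    intro y hy
    induction hy with
    | refl => rfl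
    | @tail z y hz hzy ih =>
      subst ih
      rcases eq_triangle_or_of_suffN_eq hab hbc hac
        (MarkovConnected.suffN_eq hB.1 (hz.tail hzy)).symm with h' | h'
      · exact h'
      · subst h'
        exact hzy.elim (fun h₁ => absurd h₁ h.2) fun h₁ => absurd h₁ h.1
  exact triangle_ne_triangle hab hbc hac
    (key _ (hB.2 _ _ (suffN_triangle_swap hab hbc hac).symm)).symm

lemma triangleMove_eq_of_mem_minimal (hB : IsMarkovBasis n 2 B)
    (hmin : ∀ B' ⊂ B, ¬ IsMarkovBasis n 2 B') {a' b' c' : Fin n}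
    (hab : a ≠ b) (hbc : b ≠ c) (hac : a ≠ c) (hab' : a' ≠ b') (hbc' : b' ≠ c') (hac' : a' ≠ c')
    (hw : triangleMove a b c ∈ B) (hw' : triangleMove a' b' c' ∈ B)
    (hT : ({a', b', c'} : Finset (Fin n)) = {a, b, c}) :
    triangleMove a' b' c' = triangleMove a b c := by
  have h₁ := eq_triangle_or_of_suffN_eq hab hbc hac
    (x := triangle a' b' c') (by rw [suffN_triangle hab' hbc' hac', suffN_triangle hab hbc hac, hT])
  have h₂ := eq_triangle_or_of_suffN_eq hab hbc hac
    (x := triangle a' c' b') (by rw [suffN_triangle_swap hab' hbc' hac',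
      suffN_triangle hab' hbc' hac', suffN_triangle hab hbc hac, hT])
  rcases h₁ with h₁ | h₁ <;> rcases h₂ with h₂ | h₂
  · exact absurd (h₁.trans h₂.symm) (triangle_ne_triangle hab' hbc' hac')
  · unfold triangleMove; rw [h₁, h₂]
  · have : triangleMove a' b' c' = -triangleMove a b c := by
      rw [← triangleMove_swap]; unfold triangleMove; rw [h₁, h₂]
    exact absurd (this ▸ hw')
      (neg_notMem_of_minimal hB hmin hw (triangleMove_ne_zero hab hbc hac))
  · exact absurd (h₁.trans h₂.symm) (triangle_ne_triangle hab' hbc' hac')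

noncomputable def vertexSet (w : (Fin 2 ↪ Fin n) → ℤ) : Finset (Fin n) :=
  univ.filter fun k => suffN n 2 (movePlus w) (0, k) ≠ 0

lemma vertexSet_triangleMove (hab : a ≠ b) (hbc : b ≠ c) (hac : a ≠ c) :
    vertexSet (triangleMove a b c) = {a, b, c} := by
  simp only [vertexSet, movePlus_triangleMove hab hbc hac, suffN_triangle hab hbc hac, ne_eq,
    ite_eq_right_iff, one_ne_zero, imp_false, not_not, filter_mem_eq_inter, univ_inter]

lemma mapsTo_vertexSet (hB : IsMarkovBasis n 2 B) (hmin : ∀ B' ⊂ B, ¬ IsMarkovBasis n 2 B') :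
    Set.MapsTo (vertexSet (n := n)) ↑(B.filter fun z => moveDeg n 2 z = 3)
      ↑(powersetCard 3 (univ : Finset (Fin n))) := by
  intro w hw
  obtain ⟨hwB, hdeg⟩ := mem_filter.1 hw
  obtain ⟨a, b, c, hab, hbc, hac, rfl⟩ := exists_eq_triangleMove_of_mem_minimal hB hmin hwB hdeg
  rw [mem_coe, vertexSet_triangleMove hab hbc hac, mem_powersetCard]
  exact ⟨subset_univ _, card_eq_three.2 ⟨a, b, c, hab, hac, hbc, rfl⟩⟩

lemma injOn_vertexSet (hB : IsMarkovBasis n 2 B) (hmin : ∀ B' ⊂ B, ¬ IsMarkovBasis n 2 B') :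
    Set.InjOn (vertexSet (n := n)) ↑(B.filter fun z => moveDeg n 2 z = 3) := by
  intro w hw w' hw' hT
  obtain ⟨hwB, hdeg⟩ := mem_filter.1 hw
  obtain ⟨hwB', hdeg'⟩ := mem_filter.1 hw'
  obtain ⟨a, b, c, hab, hbc, hac, rfl⟩ := exists_eq_triangleMove_of_mem_minimal hB hmin hwB hdeg
  obtain ⟨a', b', c', hab', hbc', hac', rfl⟩ :=
    exists_eq_triangleMove_of_mem_minimal hB hmin hwB' hdeg'
  rw [vertexSet_triangleMove hab hbc hac, vertexSet_triangleMove hab' hbc' hac'] at hT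
  exact (triangleMove_eq_of_mem_minimal hB hmin hab hbc hac hab' hbc' hac' hwB hwB' hT.symm).symm

lemma surjOn_vertexSet (hB : IsMarkovBasis n 2 B) :
    Set.SurjOn (vertexSet (n := n)) ↑(B.filter fun z => moveDeg n 2 z = 3)
      ↑(powersetCard 3 (univ : Finset (Fin n))) := by
  intro T hT
  obtain ⟨a, b, c, hab, hac, hbc, rfl⟩ := card_eq_three.1 (mem_powersetCard.1 hT).2
  rcases triangleMove_mem_or_of_isMarkovBasis hB hab hbc hac with h | h
  · exact ⟨_, mem_filter.2 ⟨h, moveDeg_triangleMove hab hbc hac⟩,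
      vertexSet_triangleMove hab hbc hac⟩
  · refine ⟨_, mem_filter.2 ⟨h, moveDeg_triangleMove hac hbc.symm hab⟩, ?_⟩
    rw [vertexSet_triangleMove hac hbc.symm hab, pair_comm]

end MinimalMarkovBasis

theorem count_deg_three_moves_r2_general
    (n : ℕ)
    (B : Finset ((Fin 2 ↪ Fin n) → ℤ))
    (hB : IsMarkovBasis n 2 B)
    (hmin : ∀ B' ⊂ B, ¬ IsMarkovBasis n 2 B') :
    (B.filter fun z => moveDeg n 2 z = 3).card = n.choose 3 := by
  rw [show n.choose 3 = #(powersetCard 3 (univ : Finset (Fin n))) by simp]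
  exact card_nbij vertexSet (mapsTo_vertexSet hB hmin) (injOn_vertexSet hB hmin)
    (surjOn_vertexSet hB)

/-- **Every minimal Markov basis for A_{n,2} contains exactly C(n,3) moves of degree three.** -/
theorem count_deg_three_moves_r2
    (n : ℕ) (hn : 2 ≤ n)
    (B : Finset ((Fin 2 ↪ Fin n) → ℤ))
    (hB : IsMarkovBasis n 2 B)
    (hmin : ∀ B' ⊂ B, ¬ IsMarkovBasis n 2 B') :
    (B.filter fun z => moveDeg n 2 z = 3).card = n.choose 3 :=
  count_deg_three_moves_r2_general n B hB hmin
end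

section
/- Let 1 ≤ r ≤ n and let N be a nonnegative integer. For every r×n matrix T with nonnegative integer entries such that every row sum of T equals N and every column sum of T is at most N, there exist proper votes V₁, …, V_N with T = V₁ + … + V_N. Equivalently, the affine semigroup generated by the columns of the configuration matrix A_{n,r} is normal. -/
/-!
Pad an `r × n` matrix `T` with row sums `N` and column sums at most `N` to the square matrix
`[[T, 0], [diag(N - column sums of T), Tᵀ]]`, all of whose row and column sums equal `N`.
By Hall's theorem a nonnegative integer matrix with all line sums `N > 0` has a perfect matching
in its support; subtracting the corresponding permutation matrix and inducting on `N` writes it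
as a sum of `N` permutation matrices (Birkhoff–König). The zero block forces each permutation to
send the rows of `T` to columns of `T`, so the top-left blocks of the permutation matrices are
proper votes summing to `T`.
-/

open Finset Function Matrix

/-- A proper vote: an `r × n` integer matrix with all entries in `{0,1}`, every row sum
equal to `1`, and every column sum equal to `0` or `1`. -/
def IsProperVote (r n : ℕ) (V : Matrix (Fin r) (Fin n) ℤ) : Prop :=
  (∀ j k, V j k = 0 ∨ V j k = 1) ∧
  (∀ j, ∑ k, V j k = 1) ∧
  (∀ k, ∑ j, V j k = 0 ∨ ∑ j, V j k = 1)

/-- An improper vote: an `r × n` integer matrix with every row sum equal to `1`, every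
column sum equal to `0` or `1`, exactly one entry equal to `-1`, and all other entries
in `{0,1}`. -/
def IsImproperVote (r n : ℕ) (V : Matrix (Fin r) (Fin n) ℤ) : Prop :=
  (∀ j, ∑ k, V j k = 1) ∧
  (∀ k, ∑ j, V j k = 0 ∨ ∑ j, V j k = 1) ∧
  (∃ j' k', V j' k' = -1 ∧ ∀ j k, (j, k) ≠ (j', k') → V j k = 0 ∨ V j k = 1)

theorem Matrix.exists_injective_forall_pos_apply {R ι κ : Type*} [Fintype ι] [Fintype κ]
    [Semiring R] [LinearOrder R] [IsStrictOrderedRing R] (M : Matrix ι κ R) {N : R}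
    (hN : 0 < N) (hM : ∀ i j, 0 ≤ M i j) (hrow : ∀ i, ∑ j, M i j = N)
    (hcol : ∀ j, ∑ i, M i j ≤ N) :
    ∃ f : ι → κ, Injective f ∧ ∀ i, 0 < M i (f i) := by
  classical
  refine (Fintype.all_card_le_filter_rel_iff_exists_injective fun i j ↦ 0 < M i j).mp
    fun A ↦ ?_
  set B : Finset κ := {j | ∃ i ∈ A, 0 < M i j}
  have hB : ∀ i ∈ A, ∑ j ∈ B, M i j = ∑ j, M i j := fun i hi ↦
    sum_subset (subset_univ B) fun j _ hj ↦
      (hM i j).antisymm' <| not_lt.mp fun h ↦ hj <| mem_filter.mpr ⟨mem_univ j, i, hi, h⟩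
  have : (#A : R) * N ≤ #B * N :=
    calc (#A : R) * N = ∑ i ∈ A, ∑ j ∈ B, M i j := by
          rw [sum_congr rfl hB, sum_congr rfl fun i _ ↦ hrow i, sum_const, nsmul_eq_mul]
      _ = ∑ j ∈ B, ∑ i ∈ A, M i j := sum_comm
      _ ≤ ∑ j ∈ B, ∑ i, M i j := sum_le_sum fun j _ ↦
          sum_le_sum_of_subset_of_nonneg (subset_univ A) fun i _ _ ↦ hM i j
      _ ≤ #B * N := by simpa using sum_le_sum fun j (_ : j ∈ B) ↦ hcol j
  exact_mod_cast le_of_mul_le_mul_right this hN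

section PermutationMatrix

variable {R ι κ : Type*} [DecidableEq κ] [AddCommMonoidWithOne R]

theorem Equiv.sum_toMatrix_toPEquiv_apply_right [Fintype κ] (e : ι ≃ κ) (i : ι) :
    ∑ j, (e.toPEquiv.toMatrix i j : R) = 1 := by
  simp

theorem Equiv.sum_toMatrix_toPEquiv_apply_left [Fintype ι] (e : ι ≃ κ) (j : κ) :
    ∑ i, (e.toPEquiv.toMatrix i j : R) = 1 := by
  classical
  simpa using congr_arg (∑ i, · i) (PEquiv.transpose_toMatrix_toPEquiv_apply (α := R) e j)

end PermutationMatrix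

theorem Matrix.exists_equiv_eq_sum_toMatrix_toPEquiv {ι κ : Type*} [Fintype ι] [Fintype κ]
    [DecidableEq κ] (N : ℕ) (M : Matrix ι κ ℤ) (hM : ∀ i j, 0 ≤ M i j)
    (hrow : ∀ i, ∑ j, M i j = N) (hcol : ∀ j, ∑ i, M i j = N) :
    ∃ σ : Fin N → ι ≃ κ, M = ∑ t, (σ t).toPEquiv.toMatrix := by
  induction N generalizing M with
  | zero =>
    refine ⟨finZeroElim, ?_⟩
    ext i j
    have := (sum_eq_zero_iff_of_nonneg fun j _ ↦ hM i j).mp (by exact_mod_cast hrow i)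
    simpa using this j (mem_univ j)
  | succ N ih =>
    have hN : (0 : ℤ) < (N + 1 : ℕ) := by positivity
    obtain ⟨f, hf, hfM⟩ := M.exists_injective_forall_pos_apply hN hM hrow (le_of_eq <| hcol ·)
    obtain ⟨g, hg, -⟩ := Mᵀ.exists_injective_forall_pos_apply hN (fun j i ↦ hM i j) hcol
      (le_of_eq <| hrow ·)
    set e := Equiv.ofBijective f <| (Fintype.bijective_iff_injective_and_card f).mpr
      ⟨hf, (Fintype.card_le_of_injective f hf).antisymm (Fintype.card_le_of_injective g hg)⟩
    have hM' : ∀ i j, 0 ≤ (M - e.toPEquiv.toMatrix : Matrix ι κ ℤ) i j := fun i j ↦ by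
      have := hfM i
      have he : e.toPEquiv.toMatrix i j = if f i = j then (1 : ℤ) else 0 := by simp [e]
      rw [sub_apply, he]
      split_ifs with h
      · subst h; omega
      · simpa using hM i j
    obtain ⟨σ, hσ⟩ := ih (M - e.toPEquiv.toMatrix) hM'
      (fun i ↦ by simp only [sub_apply, sum_sub_distrib, hrow,
        e.sum_toMatrix_toPEquiv_apply_right, Nat.cast_succ, add_sub_cancel_right])
      (fun j ↦ by simp only [sub_apply, sum_sub_distrib, hcol,
        e.sum_toMatrix_toPEquiv_apply_left, Nat.cast_succ, add_sub_cancel_right])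
    refine ⟨Fin.cons e σ, ?_⟩
    rw [Fin.sum_univ_succ, Fin.cons_zero]
    simp only [Fin.cons_succ, ← hσ, add_sub_cancel]

theorem Matrix.one_le_apply_of_eq_sum_toMatrix_toPEquiv {ι κ τ : Type*} [Fintype τ]
    [DecidableEq κ] {M : Matrix ι κ ℤ} {σ : τ → ι ≃ κ}
    (hM : M = ∑ t, (σ t).toPEquiv.toMatrix) (t : τ) (i : ι) : 1 ≤ M i (σ t i) := by
  rw [hM, Matrix.sum_apply]
  calc (1 : ℤ) = (σ t).toPEquiv.toMatrix i (σ t i) := by simp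
    _ ≤ _ := single_le_sum (f := fun s ↦ (σ s).toPEquiv.toMatrix i (σ t i))
      (fun s _ ↦ by simp only [PEquiv.toMatrix_apply]; split_ifs <;> simp) (mem_univ t)

section SquareCompletion

variable {R ι κ : Type*} [Fintype ι] [DecidableEq κ] [AddCommGroup R]

def Matrix.squareCompletion (M : Matrix ι κ R) (N : R) : Matrix (ι ⊕ κ) (κ ⊕ ι) R :=
  fromBlocks M 0 (diagonal fun j ↦ N - ∑ i, M i j) Mᵀ

variable {M : Matrix ι κ R} {N : R}

theorem Matrix.sum_squareCompletion_row [Fintype κ] (hrow : ∀ i, ∑ j, M i j = N)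
    (a : ι ⊕ κ) : ∑ b, M.squareCompletion N a b = N := by
  rcases a with i | j <;> simp [squareCompletion, Fintype.sum_sum_type, diagonal_apply, hrow]

theorem Matrix.sum_squareCompletion_col [Fintype κ] (hrow : ∀ i, ∑ j, M i j = N)
    (b : κ ⊕ ι) : ∑ a, M.squareCompletion N a b = N := by
  rcases b with j | i <;> simp [squareCompletion, Fintype.sum_sum_type, diagonal_apply, hrow]

theorem Matrix.squareCompletion_nonneg [PartialOrder R] [IsOrderedAddMonoid R]
    (hM : ∀ i j, 0 ≤ M i j) (hcol : ∀ j, ∑ i, M i j ≤ N) (a : ι ⊕ κ) (b : κ ⊕ ι) :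
    0 ≤ M.squareCompletion N a b := by
  rcases a with i | j <;> rcases b with j' | i'
  all_goals simp [squareCompletion, diagonal_apply, hM]
  split_ifs <;> simp [hcol]

end SquareCompletion

def voteMatrix {r n : ℕ} (σ : Fin r → Fin n) : Matrix (Fin r) (Fin n) ℤ :=
  of fun j k ↦ if σ j = k then 1 else 0

theorem isProperVote_voteMatrix {r n : ℕ} {σ : Fin r → Fin n} (hσ : Injective σ) :
    IsProperVote r n (voteMatrix σ) := by
  refine ⟨fun j k ↦ ?_, fun j ↦ by simp [voteMatrix], fun k ↦ ?_⟩
  · simp only [voteMatrix, of_apply]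
    split_ifs <;> simp
  · have : #{j | σ j = k} ≤ 1 := card_le_one.mpr fun a ha b hb ↦ hσ <| by
      rw [(mem_filter.mp ha).2, (mem_filter.mp hb).2]
    simp only [voteMatrix, of_apply, sum_boole]
    omega

theorem normality_of_birkhoff_semigroup_general
    (r n N : ℕ)
    (T : Matrix (Fin r) (Fin n) ℤ)
    (hpos : ∀ j k, 0 ≤ T j k)
    (hrow : ∀ j, ∑ k, T j k = (N : ℤ))
    (hcol : ∀ k, ∑ j, T j k ≤ (N : ℤ)) :
    ∃ V : Fin N → Matrix (Fin r) (Fin n) ℤ,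
      (∀ i, IsProperVote r n (V i)) ∧ T = ∑ i, V i := by
  obtain ⟨σ, hσ⟩ := exists_equiv_eq_sum_toMatrix_toPEquiv N (T.squareCompletion N)
    (squareCompletion_nonneg hpos hcol) (sum_squareCompletion_row hrow)
    (sum_squareCompletion_col hrow)
  have hσ_inl : ∀ t j, ∃ k, σ t (.inl j) = .inl k := fun t j ↦ by
    have := one_le_apply_of_eq_sum_toMatrix_toPEquiv hσ t (.inl j)
    rcases h : σ t (.inl j) with k | j'
    · exact ⟨k, rfl⟩
    · simp [h, squareCompletion] at this
  choose g hg using hσ_inl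
  refine ⟨fun t ↦ voteMatrix (g t), fun t ↦ isProperVote_voteMatrix fun j j' h ↦ ?_, ?_⟩
  · exact Sum.inl_injective <| (σ t).injective <| by rw [hg, hg, h]
  · ext j k
    simpa [voteMatrix, hg, squareCompletion, Matrix.sum_apply]
      using congr_fun₂ hσ (.inl j) (.inl k)

/-- For `1 ≤ r ≤ n` and `N ≥ 0`, every `r × n` matrix with
nonnegative integer entries, all row sums equal to `N` and all column sums at most `N`,
is the sum of `N` proper votes; i.e. the affine semigroup generated by the columns of
the configuration matrix `A_{n,r}` is normal. -/
theorem normality_of_birkhoff_semigroup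
    (r n N : ℕ) (hr : 1 ≤ r) (hrn : r ≤ n)
    (T : Matrix (Fin r) (Fin n) ℤ)
    (hpos : ∀ j k, 0 ≤ T j k)
    (hrow : ∀ j, ∑ k, T j k = (N : ℤ))
    (hcol : ∀ k, ∑ j, T j k ≤ (N : ℤ)) :
    ∃ V : Fin N → Matrix (Fin r) (Fin n) ℤ,
      (∀ i, IsProperVote r n (V i)) ∧ T = ∑ i, V i :=
  normality_of_birkhoff_semigroup_general r n N T hpos hrow hcol
end
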